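/- Let λ be an Uglov multipartition, d and e decomposition paths for λ, σ ∈ S_d, τ ∈ S_e. Then t_d · σ = t_e · τ if and only if d = e and σ = τ. In particular the tableaux {t_d · σ : σ ∈ S_d} are pairwise distinct. -/

import Mathlib

namespace CQHA

/-- A box (node) `(r, c, l)` with component `comp`, row `row` and column `col`
(rows and columns zero-indexed). -/
structure Box (ℓ : ℕ) where
  comp : Fin ℓ
  row : ℕ
  col : ℕ
deriving DecidableEq

/-- An `ℓ`-multipartition, recorded by the row lengths of each component. -/
structure Multipartition (ℓ : ℕ) where
  part : Fin ℓ → ℕ → ℕ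
  antitone : ∀ l, Antitone (part l)
  finite : ∀ l, ∃ N, ∀ i, N ≤ i → part l i = 0

variable {ℓ : ℕ}

/-- The set of boxes (cells) of the Young diagram of a multipartition. -/
def cells (lam : Multipartition ℓ) : Set (Box ℓ) :=
  {b | b.col < lam.part b.comp b.row}

/-- The number of boxes of a multipartition. -/
noncomputable def size (lam : Multipartition ℓ) : ℕ := (cells lam).ncard

/-- The number of boxes of the `l`-th component. -/
noncomputable def csize (lam : Multipartition ℓ) (l : Fin ℓ) : ℕ := ∑ᶠ r, lam.part l r

/-- The residue `c - r + κ_l` of a box, for a multicharge `κ`. -/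
def res (e : ℕ) (κ : Fin ℓ → ZMod e) (b : Box ℓ) : ZMod e :=
  (b.col : ZMod e) - (b.row : ZMod e) + κ b.comp

/-- Lexicographic key realizing the total order `≺_θ` attached to the loading `θ`
(with an infinitesimally small `ε`): compare `θ_l + (r - c)·ℓ` first and then `r + c`. -/
def key (θ : Fin ℓ → ℤ) (b : Box ℓ) : ℤ × ℤ :=
  (θ b.comp + ((b.row : ℤ) - (b.col : ℤ)) * (ℓ : ℤ), (b.row : ℤ) + (b.col : ℤ))

/-- `a ≺_θ b` : the box `a` is strictly to the left of the box `b`. -/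
def Bleft (θ : Fin ℓ → ℤ) (a b : Box ℓ) : Prop :=
  Prod.Lex (· < ·) (· < ·) (key θ a) (key θ b)

/-- `b` is an addable box of the diagram `S`. -/
def AddableS (S : Set (Box ℓ)) (b : Box ℓ) : Prop :=
  b ∉ S ∧ (b.col = 0 ∨ (⟨b.comp, b.row, b.col - 1⟩ : Box ℓ) ∈ S) ∧
    (b.row = 0 ∨ (⟨b.comp, b.row - 1, b.col⟩ : Box ℓ) ∈ S)

/-- `b` is a removable box of the diagram `S`. -/
def RemovableS (S : Set (Box ℓ)) (b : Box ℓ) : Prop :=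
  b ∈ S ∧ (⟨b.comp, b.row, b.col + 1⟩ : Box ℓ) ∉ S ∧ (⟨b.comp, b.row + 1, b.col⟩ : Box ℓ) ∉ S

/-- `b` is an addable-or-removable box of `lam` of residue `i`. -/
def BTheta (e : ℕ) (κ : Fin ℓ → ZMod e) (lam : Multipartition ℓ) (i : ZMod e)
    (b : Box ℓ) : Prop :=
  (AddableS (cells lam) b ∨ RemovableS (cells lam) b) ∧ res e κ b = i

/-- `a` and `b` are adjacent among the addable-or-removable `i`-boxes of `lam`,
with `a` strictly to the left of `b`. -/
def AdjacentB (e : ℕ) (κ : Fin ℓ → ZMod e) (θ : Fin ℓ → ℤ) (lam : Multipartition ℓ)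
    (i : ZMod e) (a b : Box ℓ) : Prop :=
  BTheta e κ lam i a ∧ BTheta e κ lam i b ∧ Bleft θ a b ∧
    ∀ x, BTheta e κ lam i x → ¬ (Bleft θ a x ∧ Bleft θ x b)

/-- A `(θ, i)`-staggered sequence of `lam`. -/
structure Staggered (e : ℕ) (κ : Fin ℓ → ZMod e) (θ : Fin ℓ → ℤ)
    (lam : Multipartition ℓ) (i : ZMod e) (s : List (Box ℓ)) : Prop where
  ne : s ≠ []
  nodup : s.Nodup
  removable : ∀ b ∈ s, RemovableS (cells lam) b ∧ res e κ b = i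
  chain : s.Chain' (AdjacentB e κ θ lam i)
  last_max : ∀ b, BTheta e κ lam i b → b = s.getLast ne ∨ Bleft θ b (s.getLast ne)
  head_min : ∀ a, AdjacentB e κ θ lam i a (s.head ne) → AddableS (cells lam) a

/-- The set of Uglov (equivalently, staggered) multipartitions, defined recursively:
`lam` is Uglov iff it is empty or it has a staggered sequence whose removal yields an
Uglov multipartition. -/
inductive Uglov (e : ℕ) (κ : Fin ℓ → ZMod e) (θ : Fin ℓ → ℤ) : Multipartition ℓ → Prop
  | empty (lam : Multipartition ℓ) (h : cells lam = ∅) : Uglov e κ θ lam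
  | step (lam mu : Multipartition ℓ) (i : ZMod e) (s : List (Box ℓ))
      (hs : Staggered e κ θ lam i s) (hmu : cells mu = cells lam \ {b | b ∈ s})
      (h : Uglov e κ θ mu) : Uglov e κ θ lam

/-- `L` is a decomposition path for `lam`: a sequence of staggered sequences removing
`lam` down to the empty multipartition. -/
inductive IsDecompPath (e : ℕ) (κ : Fin ℓ → ZMod e) (θ : Fin ℓ → ℤ) :
    Multipartition ℓ → List (List (Box ℓ)) → Prop
  | nil (lam : Multipartition ℓ) (h : cells lam = ∅) : IsDecompPath e κ θ lam []
  | cons (lam mu : Multipartition ℓ) (i : ZMod e) (s : List (Box ℓ))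
      (L : List (List (Box ℓ)))
      (hs : Staggered e κ θ lam i s) (hmu : cells mu = cells lam \ {b | b ∈ s})
      (h : IsDecompPath e κ θ mu L) : IsDecompPath e κ θ lam (s :: L)

/-- A standard tableau with entries `1, ..., n` on the diagram `S`: a bijection onto
`{1, ..., n}` increasing along rows and columns. -/
def IsStd (S : Set (Box ℓ)) (n : ℕ) (f : Box ℓ → ℕ) : Prop :=
  (∀ b ∈ S, 1 ≤ f b ∧ f b ≤ n) ∧
  (∀ a ∈ S, ∀ b ∈ S, f a = f b → a = b) ∧
  (∀ m : ℕ, 1 ≤ m → m ≤ n → ∃ b ∈ S, f b = m) ∧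
  (∀ b : Box ℓ, b ∈ S → (⟨b.comp, b.row + 1, b.col⟩ : Box ℓ) ∈ S →
    f b < f ⟨b.comp, b.row + 1, b.col⟩) ∧
  (∀ b : Box ℓ, b ∈ S → (⟨b.comp, b.row, b.col + 1⟩ : Box ℓ) ∈ S →
    f b < f ⟨b.comp, b.row, b.col + 1⟩)

/-- `b` belongs to the `j`-th staggered sequence of the path `L`. -/
def InSeq (L : List (List (Box ℓ))) (j : ℕ) (b : Box ℓ) : Prop :=
  ∃ h : j < L.length, b ∈ L.get ⟨j, h⟩

/-- The positive decomposition tableau `t_d` of a decomposition path: entries increase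
from left to right within each staggered sequence, and boxes of later staggered sequences
get smaller entries. -/
def IsPosTab (θ : Fin ℓ → ℤ) (S : Set (Box ℓ)) (n : ℕ) (L : List (List (Box ℓ)))
    (f : Box ℓ → ℕ) : Prop :=
  IsStd S n f ∧
  (∀ j a b, InSeq L j a → InSeq L j b → Bleft θ a b → f a < f b) ∧
  (∀ j j' a b, j' < j → InSeq L j a → InSeq L j' b → f a < f b)

/-- The negative decomposition tableau `t_d^◇` of a decomposition path: entries decrease
from left to right within each staggered sequence, and boxes of later staggered sequences
get smaller entries. -/
def IsNegTab (θ : Fin ℓ → ℤ) (S : Set (Box ℓ)) (n : ℕ) (L : List (List (Box ℓ)))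
    (f : Box ℓ → ℕ) : Prop :=
  IsStd S n f ∧
  (∀ j a b, InSeq L j a → InSeq L j b → Bleft θ a b → f b < f a) ∧
  (∀ j j' a b, j' < j → InSeq L j a → InSeq L j' b → f a < f b)

/-- The tableaux `f` (on the diagram `S`) and `g` (on the diagram `S'`) have the same
residue sequence: boxes carrying equal entries have equal residues. -/
def SameResSeq (e : ℕ) (κ : Fin ℓ → ZMod e) (S S' : Set (Box ℓ))
    (f g : Box ℓ → ℕ) : Prop :=
  ∀ a ∈ S, ∀ b ∈ S', f a = g b → res e κ a = res e κ b

/-- The tableau `g` is obtained from `f` by permuting the entries within each staggered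
sequence of `L` (the action of an element of the Young subgroup `S_d`). -/
def TwistOf (L : List (List (Box ℓ))) (f g : Box ℓ → ℕ) : Prop :=
  (∀ j a, InSeq L j a → ∃ b, InSeq L j b ∧ g b = f a) ∧
  (∀ j b, InSeq L j b → ∃ a, InSeq L j a ∧ g b = f a)

/-- The contribution of the box `b` to the degree of the tableau `f` on `S`: the number of
addable minus the number of removable boxes of `shape(f↓(f b))` with the same residue as
`b`, strictly to the right of `b`. -/
noncomputable def degContrib (e : ℕ) (κ : Fin ℓ → ZMod e) (θ : Fin ℓ → ℤ)
    (S : Set (Box ℓ)) (f : Box ℓ → ℕ) (b : Box ℓ) : ℤ :=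
  (({a | AddableS {x | x ∈ S ∧ f x ≤ f b} a ∧ res e κ a = res e κ b ∧ Bleft θ b a}.ncard : ℤ))
    - (({a | RemovableS {x | x ∈ S ∧ f x ≤ f b} a ∧ res e κ a = res e κ b ∧
          Bleft θ b a}.ncard : ℤ))

/-- The degree `deg_θ` of a standard tableau `f` on the diagram `S`. -/
noncomputable def degTab (e : ℕ) (κ : Fin ℓ → ZMod e) (θ : Fin ℓ → ℤ)
    (S : Set (Box ℓ)) (f : Box ℓ → ℕ) : ℤ :=
  ∑ᶠ b ∈ S, degContrib e κ θ S f b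

/-- The number of inversions within the staggered sequences of the tableau `f`: this is the
Coxeter length of the Young-subgroup element twisting the positive decomposition tableau
into `f`. -/
noncomputable def invCountTab (θ : Fin ℓ → ℤ) (L : List (List (Box ℓ)))
    (f : Box ℓ → ℕ) : ℕ :=
  Set.ncard {p : Box ℓ × Box ℓ |
    (∃ j, InSeq L j p.1 ∧ InSeq L j p.2) ∧ Bleft θ p.1 p.2 ∧ f p.2 < f p.1}

/-- The number of pairs of boxes in a common staggered sequence of `L`: this is the Coxeter
length `ℓ(ω₀^d)` of the longest element of the Young subgroup `S_d`. -/
noncomputable def pairCount (θ : Fin ℓ → ℤ) (L : List (List (Box ℓ))) : ℕ :=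
  Set.ncard {p : Box ℓ × Box ℓ | (∃ j, InSeq L j p.1 ∧ InSeq L j p.2) ∧ Bleft θ p.1 p.2}

section Aux

theorem bleft_trans (θ : Fin ℓ → ℤ) {a b c : Box ℓ} (h1 : Bleft θ a b)
    (h2 : Bleft θ b c) : Bleft θ a c := by
  unfold Bleft at *
  rw [Prod.lex_def] at *
  rcases h1 with h1 | ⟨h1, h1'⟩ <;> rcases h2 with h2 | ⟨h2, h2'⟩
  · exact Or.inl (h1.trans h2)
  · exact Or.inl (h2 ▸ h1)
  · exact Or.inl (h1 ▸ h2)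
  · exact Or.inr ⟨h1.trans h2, h1'.trans h2'⟩

theorem bleft_irrefl (θ : Fin ℓ → ℤ) (a : Box ℓ) : ¬ Bleft θ a a := by
  unfold Bleft; rw [Prod.lex_def]; rintro (h | ⟨h, h'⟩) <;> omega

theorem bleft_asymm (θ : Fin ℓ → ℤ) {a b : Box ℓ} (h1 : Bleft θ a b)
    (h2 : Bleft θ b a) : False := bleft_irrefl θ a (bleft_trans θ h1 h2)

instance bleft_isTrans (θ : Fin ℓ → ℤ) : IsTrans (Box ℓ) (Bleft θ) :=
  ⟨fun _ _ _ => bleft_trans θ⟩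

instance bleft_isAntisymm (θ : Fin ℓ → ℤ) : IsAntisymm (Box ℓ) (Bleft θ) :=
  ⟨fun _ _ h1 h2 => absurd h2 (fun h2 => bleft_asymm θ h1 h2)⟩

theorem chain'_iff_pairwise' {R : Box ℓ → Box ℓ → Prop} [Trans R R R] {l : List (Box ℓ)} :
    l.Chain' R ↔ l.Pairwise R := List.isChain_iff_pairwise

theorem chain'_cons' {R : Box ℓ → Box ℓ → Prop} {a b : Box ℓ} {l : List (Box ℓ)} :
    (a :: b :: l).Chain' R ↔ R a b ∧ (b :: l).Chain' R := List.isChain_cons_cons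

theorem getLast_eq_get' (l : List (Box ℓ)) (h : l ≠ []) :
    l.getLast h = l.get ⟨l.length - 1, by
      cases l with
      | nil => exact absurd rfl h
      | cons a t => simp⟩ := List.getLast_eq_getElem h

/-- Two `Bleft`-chains with the same elements are equal. -/
theorem chain_eq_of_mem_iff (θ : Fin ℓ → ℤ) {s t : List (Box ℓ)}
    (hs : s.Chain' (Bleft θ)) (ht : t.Chain' (Bleft θ))
    (h : ∀ x, x ∈ s ↔ x ∈ t) : s = t := by
  rw [chain'_iff_pairwise'] at hs ht
  have hsn : s.Nodup := hs.imp (fun {a b} (hab : Bleft θ a b) (he : a = b) =>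
    bleft_irrefl θ b (he ▸ hab))
  have htn : t.Nodup := ht.imp (fun {a b} (hab : Bleft θ a b) (he : a = b) =>
    bleft_irrefl θ b (he ▸ hab))
  exact List.Perm.eq_of_pairwise (fun a b _ _ h1 h2 => absurd h2 (fun h2 => bleft_asymm θ h1 h2))
    hs ht ((List.perm_ext_iff_of_nodup hsn htn).2 h)

/-- Distinct members of a `Bleft`-chain are comparable. -/
theorem chain_comparable (θ : Fin ℓ → ℤ) {s : List (Box ℓ)}
    (hs : s.Chain' (Bleft θ)) {a b : Box ℓ} (ha : a ∈ s) (hb : b ∈ s)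
    (hab : a ≠ b) : Bleft θ a b ∨ Bleft θ b a := by
  rw [chain'_iff_pairwise', List.pairwise_iff_get] at hs
  obtain ⟨i, hi⟩ := List.get_of_mem ha
  obtain ⟨j, hj⟩ := List.get_of_mem hb
  rcases lt_trichotomy i j with h | h | h
  · exact Or.inl (hi ▸ hj ▸ hs i j h)
  · exact absurd (hi ▸ hj ▸ congrArg s.get h) hab
  · exact Or.inr (hj ▸ hi ▸ hs j i h)

/-- The head of a `Bleft`-chain is below every other member. -/
theorem chain_head_min (θ : Fin ℓ → ℤ) {s : List (Box ℓ)}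
    (hs : s.Chain' (Bleft θ)) (hne : s ≠ []) {b : Box ℓ} (hb : b ∈ s) :
    b = s.head hne ∨ Bleft θ (s.head hne) b := by
  rw [chain'_iff_pairwise'] at hs
  obtain ⟨a, t, rfl⟩ := List.exists_cons_of_ne_nil hne
  rcases List.mem_cons.1 hb with rfl | hb
  · exact Or.inl rfl
  · exact Or.inr ((List.pairwise_cons.1 hs).1 b hb)

/-- The last element of a `Bleft`-chain is above every other member. -/
theorem chain_last_max (θ : Fin ℓ → ℤ) {s : List (Box ℓ)}
    (hs : s.Chain' (Bleft θ)) (hne : s ≠ []) {b : Box ℓ} (hb : b ∈ s) :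
    b = s.getLast hne ∨ Bleft θ b (s.getLast hne) := by
  rw [chain'_iff_pairwise', List.pairwise_iff_get] at hs
  obtain ⟨i, hi⟩ := List.get_of_mem hb
  rw [getLast_eq_get']
  rcases Nat.lt_or_ge (i : ℕ) (s.length - 1) with h | h
  · exact Or.inr (hi ▸ hs i ⟨s.length - 1, by omega⟩ h)
  · left; rw [← hi]; congr 1; ext; simp; omega


/-- Crossing lemma: a box comparable to all members of an adjacency chain cannot lie
strictly between the head and the last element. -/
theorem crossing (θ : Fin ℓ → ℤ) {R : Box ℓ → Box ℓ → Prop} (p : Box ℓ)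
    (hno : ∀ a b, R a b → ¬ (Bleft θ a p ∧ Bleft θ p b)) :
    ∀ (l : List (Box ℓ)) (hne : l ≠ []), l.Chain' R →
      (∀ y ∈ l, Bleft θ y p ∨ Bleft θ p y) →
      Bleft θ (l.head hne) p → Bleft θ p (l.getLast hne) → False := by
  intro l
  induction l with
  | nil => intro hne; exact absurd rfl hne
  | cons a t ih =>
    intro hne hc hcomp h1 h2
    cases t with
    | nil =>
      simp only [List.head_cons, List.getLast_singleton] at h1 h2
      exact bleft_asymm θ h1 h2
    | cons b t' =>
      rw [chain'_cons'] at hc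
      rcases hcomp b (by simp) with hb | hb
      · refine ih (by simp) hc.2 (fun y hy => hcomp y (by simp [hy])) ?_ ?_
        · simpa using hb
        · rw [List.getLast_cons (by simp)] at h2; exact h2
      · exact hno a b hc.1 ⟨by simpa using h1, hb⟩

/-- A staggered sequence contained in another staggered sequence equals it. -/
theorem staggered_nested {e : ℕ} {κ : Fin ℓ → ZMod e} {θ : Fin ℓ → ℤ}
    {lam : Multipartition ℓ} {i i' : ZMod e} {s s' : List (Box ℓ)}
    (hs : Staggered e κ θ lam i s) (hs' : Staggered e κ θ lam i' s')
    (hsub : ∀ b ∈ s, b ∈ s') : s = s' := by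
  have hch : s.Chain' (Bleft θ) := hs.chain.imp (fun _ _ hab => hab.2.2.1)
  have hch' : s'.Chain' (Bleft θ) := hs'.chain.imp (fun _ _ hab => hab.2.2.1)
  -- residues agree
  have hii : i = i' := by
    have hm := List.head_mem hs.ne
    rw [← (hs.removable _ hm).2, (hs'.removable _ (hsub _ hm)).2]
  subst hii
  -- it suffices to show `s' ⊆ s`
  suffices hsub' : ∀ b ∈ s', b ∈ s by
    exact chain_eq_of_mem_iff θ hch hch' (fun x => ⟨hsub x, hsub' x⟩)
  by_contra hcon
  push_neg at hcon
  obtain ⟨x, hxs', hxs⟩ := hcon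
  -- the two sequences have the same last element
  have hBlast' : BTheta e κ lam i (s'.getLast hs'.ne) :=
    ⟨Or.inr (hs'.removable _ (List.getLast_mem hs'.ne)).1,
      (hs'.removable _ (List.getLast_mem hs'.ne)).2⟩
  have hBlast : BTheta e κ lam i (s.getLast hs.ne) :=
    ⟨Or.inr (hs.removable _ (List.getLast_mem hs.ne)).1,
      (hs.removable _ (List.getLast_mem hs.ne)).2⟩
  have hlasteq : s.getLast hs.ne = s'.getLast hs'.ne := by
    rcases hs.last_max _ hBlast' with h | h
    · exact h.symm
    rcases hs'.last_max _ hBlast with h' | h'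
    · exact h'
    · exact absurd h' (fun h' => bleft_asymm θ h h')
  -- pairwise order on `s'` in terms of indices
  have hpw : ∀ (i j : Fin s'.length), i < j → Bleft θ (s'.get i) (s'.get j) := by
    rw [← List.pairwise_iff_get, ← chain'_iff_pairwise']; exact hch'
  have hBmem : ∀ b ∈ s', BTheta e κ lam i b :=
    fun b hb => ⟨Or.inr (hs'.removable _ hb).1, (hs'.removable _ hb).2⟩
  -- the maximal element of `s' \ s`
  have hIne : (Finset.univ.filter (fun j : Fin s'.length => s'.get j ∉ s)).Nonempty := by
    obtain ⟨ix, hix⟩ := List.get_of_mem hxs'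
    refine ⟨ix, ?_⟩
    rw [Finset.mem_filter]
    refine ⟨Finset.mem_univ _, ?_⟩
    rw [hix]; exact hxs
  set I := Finset.univ.filter (fun j : Fin s'.length => s'.get j ∉ s) with hI
  set i0 := I.max' hIne with hi0
  have hi0I : i0 ∈ I := I.max'_mem hIne
  have hpns : s'.get i0 ∉ s := (Finset.mem_filter.1 hi0I).2
  have hpmax : ∀ j : Fin s'.length, i0 < j → s'.get j ∈ s := by
    intro j hj
    by_contra hjns
    have hjI : j ∈ I := Finset.mem_filter.2 ⟨Finset.mem_univ _, hjns⟩
    exact absurd (I.le_max' j hjI) (not_le.2 hj)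
  set p := s'.get i0 with hp
  have hps' : p ∈ s' := by rw [hp]; exact List.get_mem s' i0
  have hBp : BTheta e κ lam i p := hBmem p hps'
  -- index of the head of `s` inside `s'`
  obtain ⟨h0, hh0⟩ := List.get_of_mem (hsub _ (List.head_mem hs.ne))
  have hne0 : i0 ≠ h0 := by
    intro h
    apply hpns
    rw [hp, h, hh0]
    exact List.head_mem hs.ne
  -- comparability of `p` with members of `s`
  have hcomp : ∀ y ∈ s, Bleft θ y p ∨ Bleft θ p y := by
    intro y hy
    obtain ⟨jy, hjy⟩ := List.get_of_mem (hsub _ hy)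
    have hyne : jy ≠ i0 := by
      intro h; apply hpns; rw [hp, ← h, hjy]; exact hy
    rcases lt_or_gt_of_ne hyne with h | h
    · exact Or.inl (by rw [← hjy, hp]; exact hpw jy i0 h)
    · exact Or.inr (by rw [← hjy, hp]; exact hpw i0 jy h)
  -- `i0 < h0`
  have hi0h0 : i0 < h0 := by
    rcases lt_or_gt_of_ne hne0 with h | h
    · exact h
    exfalso
    have hhead_p : Bleft θ (s.head hs.ne) p := by
      rw [← hh0, hp]; exact hpw h0 i0 h
    have hilast : (i0 : ℕ) < s'.length - 1 := by
      rcases Nat.lt_or_ge (i0 : ℕ) (s'.length - 1) with h' | h'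
      · exact h'
      exfalso
      have hlen : 0 < s'.length := i0.pos
      have hi0eq : (i0 : ℕ) = s'.length - 1 := by have := i0.isLt; omega
      have hple : p = s'.getLast hs'.ne := by
        rw [getLast_eq_get', hp]; congr 1; exact Fin.ext hi0eq
      apply hpns
      show s'.get i0 ∈ s
      rw [← hp, hple, ← hlasteq]
      exact List.getLast_mem hs.ne
    have hp_last : Bleft θ p (s.getLast hs.ne) := by
      rw [hp, hlasteq, getLast_eq_get']
      exact hpw i0 ⟨s'.length - 1, by omega⟩ (by simp only [Fin.lt_def]; omega)
    exact crossing θ p (fun a b hab => hab.2.2.2 p hBp) s hs.ne hs.chain hcomp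
      hhead_p hp_last
  have hsucclt : (i0 : ℕ) + 1 < s'.length := by
    have h1 : (i0 : ℕ) < (h0 : ℕ) := hi0h0
    have h2 := h0.isLt
    omega
  -- the successor of `p` in `s'` is the head of `s`
  have hsucc_eq : (i0 : ℕ) + 1 = (h0 : ℕ) := by
    by_contra hne
    have hlt : (i0 : ℕ) + 1 < (h0 : ℕ) := by
      have h1 : (i0 : ℕ) < (h0 : ℕ) := hi0h0
      omega
    have hq_mem : s'.get ⟨(i0 : ℕ) + 1, hsucclt⟩ ∈ s :=
      hpmax _ (by simp only [Fin.lt_def]; omega)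
    have hq_head : Bleft θ (s'.get ⟨(i0 : ℕ) + 1, hsucclt⟩) (s.head hs.ne) := by
      rw [← hh0]
      exact hpw _ h0 (by simp only [Fin.lt_def]; exact hlt)
    rcases chain_head_min θ hch hs.ne hq_mem with h | h
    · exact bleft_irrefl θ _ (h ▸ hq_head)
    · exact bleft_asymm θ hq_head h
  have hadj : AdjacentB e κ θ lam i p (s.head hs.ne) := by
    have hcg := List.isChain_iff_getElem.1 hs'.chain (i0 : ℕ)
      (by have := h0.isLt; omega)
    have hfin : h0 = (⟨(i0 : ℕ) + 1, hsucclt⟩ : Fin s'.length) :=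
      Fin.ext hsucc_eq.symm
    rw [hp, ← hh0, hfin]
    exact hcg
  have haddp : AddableS (cells lam) p := hs.head_min p hadj
  exact haddp.1 (hs'.removable p hps').1.1

theorem cells_finite (lam : Multipartition ℓ) : (cells lam).Finite := by
  classical
  choose N hN using lam.finite
  apply Set.Finite.subset (Finset.finite_toSet
    ((Finset.univ ×ˢ Finset.range (Finset.univ.sup N) ×ˢ
        Finset.range (Finset.univ.sup (fun l => lam.part l 0))).image
      (fun x : Fin ℓ × ℕ × ℕ => Box.mk x.1 x.2.1 x.2.2)))
  intro b hb
  have hcol : b.col < lam.part b.comp b.row := hb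
  have h0 : lam.part b.comp b.row ≤ lam.part b.comp 0 :=
    lam.antitone b.comp (Nat.zero_le _)
  have hrow : b.row < N b.comp := by
    by_contra h
    rw [hN b.comp b.row (le_of_not_gt h)] at hcol
    omega
  simp only [Finset.coe_image, Set.mem_image, Finset.mem_coe, Finset.mem_product,
    Finset.mem_univ, Finset.mem_range, true_and]
  exact ⟨(b.comp, b.row, b.col), ⟨lt_of_lt_of_le hrow (Finset.le_sup (f := N) (Finset.mem_univ b.comp)),
    lt_of_lt_of_le hcol (le_trans h0 (Finset.le_sup (f := fun l => lam.part l 0) (Finset.mem_univ b.comp)))⟩, rfl⟩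

theorem std_image (S : Set (Box ℓ)) (n : ℕ) (f : Box ℓ → ℕ) (hstd : IsStd S n f) :
    f '' S = Set.Icc 1 n := by
  obtain ⟨hbd, hinj, hsurj, _, _⟩ := hstd
  ext m
  constructor
  · rintro ⟨a, ha, rfl⟩; exact ⟨(hbd a ha).1, (hbd a ha).2⟩
  · rintro ⟨h1, h2⟩
    obtain ⟨a, haS, ha⟩ := hsurj m h1 h2
    exact ⟨a, haS, ha⟩

theorem std_ncard {S : Set (Box ℓ)} {n : ℕ} {f : Box ℓ → ℕ} (hfin : S.Finite)
    (hstd : IsStd S n f) : S.ncard = n := by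
  have h1 : (f '' S).ncard = S.ncard :=
    Set.ncard_image_of_injOn (fun x hx y hy hxy => hstd.2.1 x hx y hy hxy)
  rw [std_image S n f hstd, ← Finset.coe_Icc, Set.ncard_coe_finset, Nat.card_Icc] at h1
  omega

theorem std_count_lt {S : Set (Box ℓ)} {n : ℕ} {f : Box ℓ → ℕ}
    (hfin : S.Finite) (hstd : IsStd S n f) {b : Box ℓ} (hb : b ∈ S) :
    {a ∈ S | f a < f b}.ncard = f b - 1 ∧ {a ∈ S | f b < f a}.ncard = n - f b := by
  obtain ⟨hbd, hinj, hsurj, _, _⟩ := hstd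
  have hb1 : 1 ≤ f b := (hbd b hb).1
  have hbn : f b ≤ n := (hbd b hb).2
  constructor
  · have himg : f '' {a ∈ S | f a < f b} = Set.Icc 1 (f b - 1) := by
      ext m
      constructor
      · rintro ⟨a, ⟨haS, halt⟩, rfl⟩
        exact ⟨(hbd a haS).1, by omega⟩
      · rintro ⟨h1, h2⟩
        obtain ⟨a, haS, ha⟩ := hsurj m h1 (by omega)
        exact ⟨a, ⟨haS, by omega⟩, ha⟩
    have hcount := Set.ncard_image_of_injOn (f := f) (s := {a ∈ S | f a < f b})
      (fun x hx y hy hxy => hinj x hx.1 y hy.1 hxy)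
    rw [himg, ← Finset.coe_Icc, Set.ncard_coe_finset, Nat.card_Icc] at hcount
    omega
  · have himg : f '' {a ∈ S | f b < f a} = Set.Icc (f b + 1) n := by
      ext m
      constructor
      · rintro ⟨a, ⟨haS, halt⟩, rfl⟩
        exact ⟨by omega, (hbd a haS).2⟩
      · rintro ⟨h1, h2⟩
        obtain ⟨a, haS, ha⟩ := hsurj m (by omega) h2
        exact ⟨a, ⟨haS, by omega⟩, ha⟩
    have hcount := Set.ncard_image_of_injOn (f := f) (s := {a ∈ S | f b < f a})
      (fun x hx y hy hxy => hinj x hx.1 y hy.1 hxy)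
    rw [himg, ← Finset.coe_Icc, Set.ncard_coe_finset, Nat.card_Icc] at hcount
    omega

theorem mp_eq_of_cells_eq {lam mu : Multipartition ℓ} (h : cells lam = cells mu) :
    lam = mu := by
  rcases lam with ⟨p, pa, pf⟩
  rcases mu with ⟨q, qa, qf⟩
  have hpq : p = q := by
    funext l r
    have key : ∀ c, c < p l r ↔ c < q l r := by
      intro c
      exact Set.ext_iff.1 h (Box.mk l r c)
    have h1 := key (p l r)
    have h2 := key (q l r)
    omega
  subst hpq
  rfl

theorem inSeq_cons_zero {s : List (Box ℓ)} {T : List (List (Box ℓ))} {b : Box ℓ} :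
    InSeq (s :: T) 0 b ↔ b ∈ s :=
  ⟨fun ⟨_, hb⟩ => hb, fun hb => ⟨Nat.succ_pos _, hb⟩⟩

theorem inSeq_cons_succ {s : List (Box ℓ)} {T : List (List (Box ℓ))} {j : ℕ}
    {b : Box ℓ} : InSeq (s :: T) (j + 1) b ↔ InSeq T j b := by
  constructor
  · rintro ⟨h, hb⟩
    exact ⟨by simpa [Nat.succ_lt_succ_iff] using h, hb⟩
  · rintro ⟨h, hb⟩
    exact ⟨by simpa [Nat.succ_lt_succ_iff] using h, hb⟩

theorem path_mem_iff {e : ℕ} {κ : Fin ℓ → ZMod e} {θ : Fin ℓ → ℤ}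
    {lam : Multipartition ℓ} {L : List (List (Box ℓ))}
    (hL : IsDecompPath e κ θ lam L) :
    ∀ b, b ∈ cells lam ↔ ∃ j, InSeq L j b := by
  induction hL with
  | nil lam h =>
    intro b
    constructor
    · intro hb; rw [h] at hb; exact absurd hb (Set.notMem_empty b)
    · rintro ⟨j, hj, _⟩; exact absurd hj (by simp)
  | cons lam mu i s T hs hmu hpath ih =>
    intro b
    constructor
    · intro hb
      by_cases hbs : b ∈ s
      · exact ⟨0, inSeq_cons_zero.2 hbs⟩
      · have hbm : b ∈ cells mu := by rw [hmu]; exact ⟨hb, hbs⟩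
        obtain ⟨j, hj⟩ := (ih b).1 hbm
        exact ⟨j + 1, inSeq_cons_succ.2 hj⟩
    · rintro ⟨j, hj⟩
      cases j with
      | zero => exact (hs.removable b (inSeq_cons_zero.1 hj)).1.1
      | succ j =>
        have hbm : b ∈ cells mu := (ih b).2 ⟨j, inSeq_cons_succ.1 hj⟩
        rw [hmu] at hbm
        exact hbm.1

theorem path_disjoint {e : ℕ} {κ : Fin ℓ → ZMod e} {θ : Fin ℓ → ℤ}
    {lam : Multipartition ℓ} {L : List (List (Box ℓ))}
    (hL : IsDecompPath e κ θ lam L) :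
    ∀ j j' b, InSeq L j b → InSeq L j' b → j = j' := by
  induction hL with
  | nil lam h =>
    rintro j j' b ⟨hj, _⟩
    exact absurd hj (by simp)
  | cons lam mu i s T hs hmu hpath ih =>
    have hmem := path_mem_iff hpath
    intro j j' b hj hj'
    match j, j' with
    | 0, 0 => rfl
    | 0, j' + 1 =>
      exfalso
      have h1 : b ∈ s := inSeq_cons_zero.1 hj
      have h2 : b ∈ cells mu := (hmem b).2 ⟨j', inSeq_cons_succ.1 hj'⟩
      rw [hmu] at h2
      exact h2.2 h1
    | j + 1, 0 =>
      exfalso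
      have h1 : b ∈ s := inSeq_cons_zero.1 hj'
      have h2 : b ∈ cells mu := (hmem b).2 ⟨j, inSeq_cons_succ.1 hj⟩
      rw [hmu] at h2
      exact h2.2 h1
    | j + 1, j' + 1 =>
      exact congrArg (· + 1) (ih j j' b (inSeq_cons_succ.1 hj) (inSeq_cons_succ.1 hj'))

theorem path_seq_chain {e : ℕ} {κ : Fin ℓ → ZMod e} {θ : Fin ℓ → ℤ}
    {lam : Multipartition ℓ} {L : List (List (Box ℓ))}
    (hL : IsDecompPath e κ θ lam L) :
    ∀ (j : ℕ) (h : j < L.length), (L.get ⟨j, h⟩).Chain' (Bleft θ) := by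
  induction hL with
  | nil lam h => intro j hj; exact absurd hj (by simp)
  | cons lam mu i s T hs hmu hpath ih =>
    intro j hj
    cases j with
    | zero => exact hs.chain.imp (fun _ _ hab => hab.2.2.1)
    | succ j => exact ih j (by simpa [Nat.succ_lt_succ_iff] using hj)

theorem posTab_lt_iff {e : ℕ} {κ : Fin ℓ → ZMod e} {θ : Fin ℓ → ℤ}
    {lam : Multipartition ℓ} {L : List (List (Box ℓ))} {n : ℕ} {f : Box ℓ → ℕ}
    (hL : IsDecompPath e κ θ lam L) (hf : IsPosTab θ (cells lam) n L f)
    {a b : Box ℓ} (ha : a ∈ cells lam) (hb : b ∈ cells lam) :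
    f a < f b ↔
      ∃ j j', InSeq L j a ∧ InSeq L j' b ∧ (j' < j ∨ (j = j' ∧ Bleft θ a b)) := by
  obtain ⟨hstd, h2, h3⟩ := hf
  constructor
  · intro hlt
    obtain ⟨j, hj⟩ := (path_mem_iff hL a).1 ha
    obtain ⟨j', hj'⟩ := (path_mem_iff hL b).1 hb
    refine ⟨j, j', hj, hj', ?_⟩
    rcases lt_trichotomy j j' with h | h | h
    · exact absurd (h3 j' j b a h hj' hj) (by omega)
    · subst h
      refine Or.inr ⟨rfl, ?_⟩
      obtain ⟨hjl, hja⟩ := hj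
      obtain ⟨hjl', hjb⟩ := hj'
      have hne : a ≠ b := fun h => by rw [h] at hlt; omega
      rcases chain_comparable θ (path_seq_chain hL j hjl) hja hjb hne with h | h
      · exact h
      · exact absurd (h2 j b a ⟨hjl, hjb⟩ ⟨hjl, hja⟩ h) (by omega)
    · exact Or.inl h
  · rintro ⟨j, j', hj, hj', h | ⟨rfl, hB⟩⟩
    · exact h3 j j' a b h hj hj'
    · exact h2 j a b hj hj' hB

theorem posTab_unique {e : ℕ} {κ : Fin ℓ → ZMod e} {θ : Fin ℓ → ℤ}
    {lam : Multipartition ℓ} {L : List (List (Box ℓ))} {n : ℕ} {f f' : Box ℓ → ℕ}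
    (hL : IsDecompPath e κ θ lam L)
    (hf : IsPosTab θ (cells lam) n L f) (hf' : IsPosTab θ (cells lam) n L f')
    {b : Box ℓ} (hb : b ∈ cells lam) : f b = f' b := by
  have hfin := cells_finite lam
  have hset : {a ∈ cells lam | f a < f b} = {a ∈ cells lam | f' a < f' b} := by
    ext a
    simp only [Set.mem_setOf_eq, and_congr_right_iff]
    intro ha
    rw [posTab_lt_iff hL hf ha hb, posTab_lt_iff hL hf' ha hb]
  have h1 := (std_count_lt hfin hf.1 hb).1
  have h2 := (std_count_lt hfin hf'.1 hb).1
  rw [hset, h2] at h1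
  have hb1 : 1 ≤ f b := (hf.1.1 b hb).1
  have hb1' : 1 ≤ f' b := (hf'.1.1 b hb).1
  omega

theorem image_eq_of_maps {S : Set (Box ℓ)} (hfin : S.Finite) {A : Set (Box ℓ)}
    (hA : A ⊆ S) {f g : Box ℓ → ℕ} (hg : Set.InjOn g S) (hf : Set.InjOn f S)
    (hmaps : ∀ a ∈ A, ∃ b ∈ A, g a = f b) : g '' A = f '' A := by
  apply Set.eq_of_subset_of_ncard_le
  · rintro m ⟨a, ha, rfl⟩
    obtain ⟨b, hb, he⟩ := hmaps a ha
    exact ⟨b, hb, he.symm⟩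
  · rw [Set.ncard_image_of_injOn (hf.mono hA), Set.ncard_image_of_injOn (hg.mono hA)]
  · exact (hfin.subset hA).image f

/-- The entries of a positive decomposition tableau on the first staggered sequence are
exactly the top block of entries. -/
theorem posTab_top_block {e : ℕ} {κ : Fin ℓ → ZMod e} {θ : Fin ℓ → ℤ}
    {lam : Multipartition ℓ} {i : ZMod e} {s : List (Box ℓ)} {T : List (List (Box ℓ))}
    {n : ℕ} {f : Box ℓ → ℕ}
    (hs : Staggered e κ θ lam i s)
    (hL : IsDecompPath e κ θ lam (s :: T))
    (hf : IsPosTab θ (cells lam) n (s :: T) f) :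
    f '' {b | b ∈ s} = Set.Ioc (n - s.length) n ∧ s.length ≤ n := by
  have hfin := cells_finite lam
  have hsS : {b | b ∈ s} ⊆ cells lam := fun b hb => (hs.removable b hb).1.1
  have hn : (cells lam).ncard = n := std_ncard hfin hf.1
  have hkcard : ({b | b ∈ s} : Set (Box ℓ)).ncard = s.length := by
    classical
    have : ({b | b ∈ s} : Set (Box ℓ)) = ↑s.toFinset := by
      ext b; simp [List.mem_toFinset]
    rw [this, Set.ncard_coe_finset, List.toFinset_card_of_nodup hs.nodup]
  have hkn : s.length ≤ n := by
    rw [← hkcard, ← hn]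
    exact Set.ncard_le_ncard hsS hfin
  refine ⟨?_, hkn⟩
  have hk1 : 1 ≤ s.length := by
    have := hs.ne
    cases s with
    | nil => exact absurd rfl this
    | cons a t => simp
  apply Set.eq_of_subset_of_ncard_le
  · rintro m ⟨a, ha, rfl⟩
    have haS : a ∈ cells lam := hsS ha
    refine ⟨?_, (hf.1.1 a haS).2⟩
    have hc := (std_count_lt hfin hf.1 haS).2
    have hsub2 : {x ∈ cells lam | f a < f x} ⊆ {b | b ∈ s} \ {a} := by
      rintro x ⟨hxS, hxlt⟩
      obtain ⟨j, hj⟩ := (path_mem_iff hL x).1 hxS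
      cases j with
      | zero =>
        refine ⟨inSeq_cons_zero.1 hj, ?_⟩
        intro hxa
        rw [Set.mem_singleton_iff] at hxa
        rw [hxa] at hxlt
        omega
      | succ j =>
        exfalso
        have := hf.2.2 (j + 1) 0 x a (Nat.succ_pos _) hj (inSeq_cons_zero.2 ha)
        omega
    have hle := Set.ncard_le_ncard hsub2 ((hfin.subset hsS).diff)
    rw [hc, Set.ncard_diff_singleton_of_mem ha] at hle
    rw [hkcard] at hle
    have han : f a ≤ n := (hf.1.1 a haS).2
    omega
  · have hinjf : Set.InjOn f (cells lam) := fun x hx y hy hxy => hf.1.2.1 x hx y hy hxy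
    rw [Set.ncard_image_of_injOn (hinjf.mono hsS)]
    rw [hkcard, ← Finset.coe_Ioc, Set.ncard_coe_finset, Nat.card_Ioc]
    omega
  · exact Set.finite_Ioc _ _

theorem seq_ncard {s : List (Box ℓ)} (h : s.Nodup) :
    ({b | b ∈ s} : Set (Box ℓ)).ncard = s.length := by
  classical
  have hset : ({b | b ∈ s} : Set (Box ℓ)) = ↑s.toFinset := by
    ext b; simp [List.mem_toFinset]
  rw [hset, Set.ncard_coe_finset, List.toFinset_card_of_nodup h]

theorem std_restrict {S : Set (Box ℓ)} {n k : ℕ} {F : Box ℓ → ℕ} {A S' : Set (Box ℓ)}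
    (hfin : S.Finite) (hA : A ⊆ S) (hS' : S' = S \ A)
    (hstd : IsStd S n F) (hk : k ≤ n)
    (hblock : F '' A = Set.Ioc (n - k) n) : IsStd S' (n - k) F := by
  obtain ⟨hbd, hinj, hsurj, hrow, hcol⟩ := hstd
  have hsub : S' ⊆ S := by rw [hS']; exact Set.diff_subset
  refine ⟨?_, ?_, ?_, ?_, ?_⟩
  · intro b hb
    refine ⟨(hbd b (hsub hb)).1, ?_⟩
    by_contra hcon
    have hmem : F b ∈ Set.Ioc (n - k) n := ⟨by omega, (hbd b (hsub hb)).2⟩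
    rw [← hblock] at hmem
    obtain ⟨x, hxA, hFx⟩ := hmem
    have : x = b := hinj x (hA hxA) b (hsub hb) hFx
    rw [hS'] at hb
    exact hb.2 (this ▸ hxA)
  · intro a ha b hb h
    exact hinj a (hsub ha) b (hsub hb) h
  · intro m h1 h2
    obtain ⟨b, hbS, hFb⟩ := hsurj m h1 (by omega)
    refine ⟨b, ?_, hFb⟩
    rw [hS']
    refine ⟨hbS, ?_⟩
    intro hbA
    have hmem : F b ∈ Set.Ioc (n - k) n := hblock ▸ ⟨b, hbA, rfl⟩
    have h3 := hmem.1
    rw [hFb] at h3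
    omega
  · intro b hb hb'
    exact hrow b (hsub hb) (hsub hb')
  · intro b hb hb'
    exact hcol b (hsub hb) (hsub hb')

theorem twist_top_block {e : ℕ} {κ : Fin ℓ → ZMod e} {θ : Fin ℓ → ℤ}
    {lam : Multipartition ℓ} {i : ZMod e} {s : List (Box ℓ)} {T : List (List (Box ℓ))}
    {n : ℕ} {f : Box ℓ → ℕ} {π : ℕ → ℕ}
    (hs : Staggered e κ θ lam i s)
    (hL : IsDecompPath e κ θ lam (s :: T))
    (hf : IsPosTab θ (cells lam) n (s :: T) f)
    (hπ : ∀ j a, InSeq (s :: T) j a → ∃ b, InSeq (s :: T) j b ∧ π (f a) = f b)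
    (hstd : IsStd (cells lam) n (fun b => π (f b))) :
    (fun b => π (f b)) '' {b | b ∈ s} = Set.Ioc (n - s.length) n := by
  have htb := posTab_top_block hs hL hf
  rw [← htb.1]
  refine image_eq_of_maps (cells_finite lam) (fun b hb => (hs.removable b hb).1.1)
    (fun x hx y hy hxy => hstd.2.1 x hx y hy hxy)
    (fun x hx y hy hxy => hf.1.2.1 x hx y hy hxy) ?_
  intro a ha
  obtain ⟨b, hb, he⟩ := hπ 0 a (inSeq_cons_zero.2 ha)
  exact ⟨b, inSeq_cons_zero.1 hb, he⟩

theorem top_seq_iff {e : ℕ} {κ : Fin ℓ → ZMod e} {θ : Fin ℓ → ℤ}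
    {lam : Multipartition ℓ} {i : ZMod e} {s : List (Box ℓ)} {T : List (List (Box ℓ))}
    {n : ℕ} {f : Box ℓ → ℕ} {π : ℕ → ℕ}
    (hs : Staggered e κ θ lam i s)
    (hL : IsDecompPath e κ θ lam (s :: T))
    (hf : IsPosTab θ (cells lam) n (s :: T) f)
    (hπ : ∀ j a, InSeq (s :: T) j a → ∃ b, InSeq (s :: T) j b ∧ π (f a) = f b)
    (hstd : IsStd (cells lam) n (fun b => π (f b)))
    {b : Box ℓ} (hb : b ∈ cells lam) :
    b ∈ s ↔ n - s.length < π (f b) := by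
  have htb := posTab_top_block hs hL hf
  have hgb := twist_top_block hs hL hf hπ hstd
  constructor
  · intro hbs
    have hmem : π (f b) ∈ Set.Ioc (n - s.length) n := hgb ▸ ⟨b, hbs, rfl⟩
    exact hmem.1
  · intro hlt
    obtain ⟨j, hj⟩ := (path_mem_iff hL b).1 hb
    cases j with
    | zero => exact inSeq_cons_zero.1 hj
    | succ j =>
      exfalso
      obtain ⟨c, hc, hfc⟩ := hπ (j + 1) b hj
      have hcS : c ∈ cells lam := (path_mem_iff hL c).2 ⟨j + 1, hc⟩
      have hfc_mem : f c ∈ Set.Ioc (n - s.length) n :=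
        ⟨by rw [← hfc]; exact hlt, (hf.1.1 c hcS).2⟩
      rw [← htb.1] at hfc_mem
      obtain ⟨x, hx, hfx⟩ := hfc_mem
      have hxc : x = c := hf.1.2.1 x ((hs.removable x hx).1.1) c hcS hfx
      rw [hxc] at hx
      exact absurd (path_disjoint hL 0 (j + 1) c (inSeq_cons_zero.2 hx) hc) (by omega)

theorem posTab_restrict {e : ℕ} {κ : Fin ℓ → ZMod e} {θ : Fin ℓ → ℤ}
    {lam mu : Multipartition ℓ} {i : ZMod e} {s : List (Box ℓ)}
    {T : List (List (Box ℓ))} {n : ℕ} {f : Box ℓ → ℕ}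
    (hs : Staggered e κ θ lam i s)
    (hL : IsDecompPath e κ θ lam (s :: T))
    (hmu : cells mu = cells lam \ {b | b ∈ s})
    (hf : IsPosTab θ (cells lam) n (s :: T) f) :
    IsPosTab θ (cells mu) (n - s.length) T f := by
  have htb := posTab_top_block hs hL hf
  refine ⟨std_restrict (cells_finite lam) (fun b hb => (hs.removable b hb).1.1) hmu
    hf.1 htb.2 htb.1, ?_, ?_⟩
  · intro j a b hja hjb hB
    exact hf.2.1 (j + 1) a b (inSeq_cons_succ.2 hja) (inSeq_cons_succ.2 hjb) hB
  · intro j j' a b hjj hja hjb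
    exact hf.2.2 (j + 1) (j' + 1) a b (by omega) (inSeq_cons_succ.2 hja)
      (inSeq_cons_succ.2 hjb)

theorem forward_aux {e : ℕ} {κ : Fin ℓ → ZMod e} {θ : Fin ℓ → ℤ}
    {lam : Multipartition ℓ} {L : List (List (Box ℓ))}
    (hL : IsDecompPath e κ θ lam L) :
    ∀ {L' : List (List (Box ℓ))} {f f' : Box ℓ → ℕ} {π π' : ℕ → ℕ},
    IsDecompPath e κ θ lam L' →
    IsPosTab θ (cells lam) (size lam) L f →
    IsPosTab θ (cells lam) (size lam) L' f' →
    (∀ j a, InSeq L j a → ∃ b, InSeq L j b ∧ π (f a) = f b) →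
    (∀ j a, InSeq L' j a → ∃ b, InSeq L' j b ∧ π' (f' a) = f' b) →
    IsStd (cells lam) (size lam) (fun b => π (f b)) →
    IsStd (cells lam) (size lam) (fun b => π' (f' b)) →
    (∀ b ∈ cells lam, π (f b) = π' (f' b)) →
    L = L' ∧ ∀ m : ℕ, 1 ≤ m → m ≤ size lam → π m = π' m := by
  induction hL with
  | nil lam h =>
    intro L' f f' π π' hL' hf hf' hπ hπ' hstd hstd' heq
    have hsize : size lam = 0 := by unfold size; rw [h]; exact Set.ncard_empty _
    cases hL' with
    | nil lam2 h' => exact ⟨rfl, fun m h1 h2 => by omega⟩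
    | cons lam2 mu' i' s' T' hs' hmu' htail' =>
      exfalso
      have hhd := (hs'.removable _ (List.head_mem hs'.ne)).1.1
      rw [h] at hhd
      exact Set.notMem_empty _ hhd
  | cons lam mu i s T hs hmu htail ih =>
    intro L' f f' π π' hL' hf hf' hπ hπ' hstd hstd' heq
    have hLc : IsDecompPath e κ θ lam (s :: T) :=
      IsDecompPath.cons lam mu i s T hs hmu htail
    have hL'c := hL'
    cases hL' with
    | nil lam2 h =>
      exfalso
      have hhd := (hs.removable _ (List.head_mem hs.ne)).1.1
      rw [h] at hhd
      exact Set.notMem_empty _ hhd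
    | cons lam2 mu' i' s' T' hs' hmu' htail' =>
      have hsS : {b : Box ℓ | b ∈ s} ⊆ cells lam := fun b hb => (hs.removable b hb).1.1
      have hss : s = s' := by
        rcases le_total s.length s'.length with hlen | hlen
        · refine staggered_nested hs hs' ?_
          intro b hb
          have hbS : b ∈ cells lam := hsS hb
          have h1 := (top_seq_iff hs hLc hf hπ hstd hbS).1 hb
          rw [heq b hbS] at h1
          exact (top_seq_iff hs' hL'c hf' hπ' hstd' hbS).2 (by omega)
        · refine (staggered_nested hs' hs ?_).symm
          intro b hb
          have hbS : b ∈ cells lam := (hs'.removable b hb).1.1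
          have h1 := (top_seq_iff hs' hL'c hf' hπ' hstd' hbS).1 hb
          rw [← heq b hbS] at h1
          exact (top_seq_iff hs hLc hf hπ hstd hbS).2 (by omega)
      subst hss
      have hmueq : mu = mu' := mp_eq_of_cells_eq (by rw [hmu, hmu'])
      subst hmueq
      have htb := posTab_top_block hs hLc hf
      have hk := htb.2
      have hfinS := cells_finite lam
      have hsize_mu : size mu = size lam - s.length := by
        unfold size
        rw [hmu, Set.ncard_diff hsS (hfinS.subset hsS), seq_ncard hs.nodup]
      have hfres : IsPosTab θ (cells mu) (size mu) T f := by
        rw [hsize_mu]; exact posTab_restrict hs hLc hmu hf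
      have hfres' : IsPosTab θ (cells mu) (size mu) T' f' := by
        rw [hsize_mu]; exact posTab_restrict hs' hL'c hmu' hf'
      have hπres : ∀ j a, InSeq T j a → ∃ b, InSeq T j b ∧ π (f a) = f b := by
        intro j a hja
        obtain ⟨b, hb, he⟩ := hπ (j + 1) a (inSeq_cons_succ.2 hja)
        exact ⟨b, inSeq_cons_succ.1 hb, he⟩
      have hπres' : ∀ j a, InSeq T' j a → ∃ b, InSeq T' j b ∧ π' (f' a) = f' b := by
        intro j a hja
        obtain ⟨b, hb, he⟩ := hπ' (j + 1) a (inSeq_cons_succ.2 hja)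
        exact ⟨b, inSeq_cons_succ.1 hb, he⟩
      have hstdres : IsStd (cells mu) (size mu) (fun b => π (f b)) := by
        rw [hsize_mu]
        exact std_restrict hfinS hsS hmu hstd hk (twist_top_block hs hLc hf hπ hstd)
      have hstdres' : IsStd (cells mu) (size mu) (fun b => π' (f' b)) := by
        rw [hsize_mu]
        exact std_restrict hfinS hsS hmu' hstd' hk
          (twist_top_block hs' hL'c hf' hπ' hstd')
      have heqres : ∀ b ∈ cells mu, π (f b) = π' (f' b) := by
        intro b hb
        have hbS : b ∈ cells lam := by rw [hmu] at hb; exact hb.1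
        exact heq b hbS
      obtain ⟨hTT, hπm⟩ := ih htail' hfres hfres' hπres hπres' hstdres hstdres' heqres
      subst hTT
      refine ⟨rfl, ?_⟩
      intro m h1 h2
      rcases Nat.lt_or_ge (size lam - s.length) m with hm | hm
      · have hmem : m ∈ Set.Ioc (size lam - s.length) (size lam) := ⟨hm, h2⟩
        rw [← htb.1] at hmem
        obtain ⟨a, ha, hfa⟩ := hmem
        have haS : a ∈ cells lam := hsS ha
        have hfeq : f a = f' a := posTab_unique hLc hf hf' haS
        have hthis := heq a haS
        rw [hfa] at hthis
        rw [← hfeq, hfa] at hthis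
        exact hthis
      · exact hπm m h1 (by rw [hsize_mu]; omega)

end Aux

end CQHA

open CQHA

/-- Let `lam` be an Uglov multipartition with decomposition paths `L, L'`,
positive decomposition tableaux `f, f'`, and let `π, π'` implement elements `σ ∈ S_d`,
`τ ∈ S_e` (permutations of the entries preserving the entry sets of each staggered
sequence, so that `t_d·σ` has entry function `π ∘ f` and `t_e·τ` has entry function
`π' ∘ f'`, both standard).  Then `t_d·σ = t_e·τ` if and only if `d = e` and `σ = τ`
(the two permutations agree on all entries `1, ..., n`). -/
theorem decomposition_tableaux_pairwise_distinct {ℓ : ℕ} (e : ℕ)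
    (κ : Fin ℓ → ZMod e) (θ : Fin ℓ → ℤ)
    (lam : Multipartition ℓ) (hU : Uglov e κ θ lam)
    (L L' : List (List (Box ℓ)))
    (hL : IsDecompPath e κ θ lam L) (hL' : IsDecompPath e κ θ lam L')
    (f f' : Box ℓ → ℕ)
    (hf : IsPosTab θ (cells lam) (size lam) L f)
    (hf' : IsPosTab θ (cells lam) (size lam) L' f')
    (π π' : ℕ → ℕ)
    (hπ : ∀ j a, InSeq L j a → ∃ b, InSeq L j b ∧ π (f a) = f b)
    (hπ' : ∀ j a, InSeq L' j a → ∃ b, InSeq L' j b ∧ π' (f' a) = f' b)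
    (hstd : IsStd (cells lam) (size lam) (fun b => π (f b)))
    (hstd' : IsStd (cells lam) (size lam) (fun b => π' (f' b))) :
    (∀ b ∈ cells lam, π (f b) = π' (f' b)) ↔
      (L = L' ∧ ∀ m : ℕ, 1 ≤ m → m ≤ size lam → π m = π' m) := by
  constructor
  · intro heq
    exact forward_aux hL hL' hf hf' hπ hπ' hstd hstd' heq
  · rintro ⟨rfl, hπeq⟩
    intro b hb
    have hfeq : f b = f' b := posTab_unique hL hf hf' hb
    rw [← hfeq]
    exact hπeq (f b) (hf.1.1 b hb).1 (hf.1.1 b hb).2
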